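/- arXiv:2509.10174 — 4 statements merged into one kernel-verified Lean document; each statement's English description precedes it below -/
import Mathlib

section
/- For a geometric random variable N with parameter p ∈ (0,1) and fixed modulus R, the total variation distance between the law of N mod R and the uniform distribution on {0,...,R-1} tends to 0 as p → 0. -/
open Filter

lemma geom_mod_tsum_aux (R s : ℕ) (hs1 : 1 ≤ s) (hsR : s ≤ R) (p : ℝ)
    (hp0 : 0 < p) (hp1 : p < 1) :
    (∑' k : ℕ, (if 1 ≤ k ∧ k % R = s % R then (1 - p) ^ (k - 1) * p else 0))
      = (1 - p) ^ (s - 1) / (∑ i ∈ Finset.range R, (1 - p) ^ i) := by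
  have hR : 1 ≤ R := le_trans hs1 hsR
  set x : ℝ := 1 - p with hxdef
  have hx0 : 0 < x := by simp only [hxdef]; linarith
  have hx1 : x < 1 := by simp only [hxdef]; linarith
  set F : ℕ → ℝ := fun k => if 1 ≤ k ∧ k % R = s % R then x ^ (k - 1) * p else 0 with hF
  set i : ℕ → ℕ := fun j => s + j * R with hi
  have hinj : Function.Injective i := by
    intro a b hab
    simp only [hi] at hab
    have : a * R = b * R := by omega
    exact Nat.eq_of_mul_eq_mul_right (by omega) this
  have hsupp : Function.support F ⊆ Set.range i := by
    intro k hk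
    simp only [Function.mem_support, hF] at hk
    by_cases hc : 1 ≤ k ∧ k % R = s % R
    · obtain ⟨hk1, hkr⟩ := hc
      have hks : s ≤ k := by
        rcases eq_or_lt_of_le hsR with h | h
        · rw [h]
          have : R ∣ k := Nat.dvd_of_mod_eq_zero (by rw [hkr, h, Nat.mod_self])
          exact Nat.le_of_dvd (by omega) this
        · have : k % R = s := by rw [hkr, Nat.mod_eq_of_lt h]
          calc s = k % R := this.symm
          _ ≤ k := Nat.mod_le k R
      have hmod : (k - s) % R = 0 := Nat.sub_mod_eq_zero_of_mod_eq hkr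
      refine ⟨(k - s) / R, ?_⟩
      simp only [hi]
      have := Nat.div_mul_cancel (Nat.dvd_of_mod_eq_zero hmod)
      omega
    · simp [hc] at hk
  have hmem : ∀ j : ℕ, 1 ≤ i j ∧ (i j) % R = s % R := by
    intro j
    refine ⟨by simp only [hi]; omega, ?_⟩
    simp only [hi]
    exact Nat.add_mul_mod_self_right s j R
  have hterm : ∀ j : ℕ, F (i j) = (x ^ (s - 1) * p) * (x ^ R) ^ j := by
    intro j
    simp only [hF, if_pos (hmem j), hi]
    rw [show s + j * R - 1 = (s - 1) + j * R by omega, pow_add, pow_mul']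
    rw [if_pos ⟨by omega, Nat.add_mul_mod_self_right s j R⟩]
    ring
  have hxR1 : x ^ R < 1 := pow_lt_one₀ hx0.le hx1 (by omega)
  have hxR0 : (0:ℝ) ≤ x ^ R := by positivity
  have htsum : ∑' k, F k = (x ^ (s - 1) * p) * (1 - x ^ R)⁻¹ := by
    rw [← hinj.tsum_eq hsupp]
    simp only [hterm]
    rw [tsum_mul_left, tsum_geometric_of_lt_one hxR0 hxR1]
  set D : ℝ := ∑ i ∈ Finset.range R, x ^ i with hDdef
  have hDpos : 0 < D := by
    apply Finset.sum_pos
    · intro j _; positivity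
    · exact ⟨0, Finset.mem_range.mpr (by omega)⟩
  have hgeo : 1 - x ^ R = p * D := by
    have h1 := geom_sum_mul (x := x) (n := R)
    rw [hDdef]
    nlinarith [h1]
  rw [htsum, hgeo]
  field_simp

lemma geom_mod_tsum_eq (R : ℕ) (hR : 1 ≤ R) (p : ℝ) (hp : p ∈ Set.Ioo (0:ℝ) 1)
    (r : ℕ) (hr : r < R) :
    (∑' k : ℕ, (if 1 ≤ k ∧ k % R = r then (1 - p) ^ (k - 1) * p else 0))
      = (1 - p) ^ ((if r = 0 then R else r) - 1)
          / (∑ i ∈ Finset.range R, (1 - p) ^ i) := by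
  obtain ⟨hp0, hp1⟩ := hp
  rcases eq_or_ne r 0 with h | h
  · subst h
    have := geom_mod_tsum_aux R R hR le_rfl p hp0 hp1
    simpa [Nat.mod_self] using this
  · have h1 : 1 ≤ r := by omega
    have := geom_mod_tsum_aux R r h1 hr.le p hp0 hp1
    simpa [Nat.mod_eq_of_lt hr, h] using this

/-- Total variation convergence of the modular-reduced geometric law to the
uniform law on `{0,…,R-1}` as `p → 0⁺`:
`(1/2) ∑_{r<R} |Pr[N mod R = r] - 1/R| → 0`. -/
theorem geometric_mod_tv_tendsto_zero (R : ℕ) (hR : 1 ≤ R) :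
    Tendsto (fun p : ℝ => (1 / 2) * ∑ r ∈ Finset.range R,
        |(∑' k : ℕ, (if 1 ≤ k ∧ k % R = r then (1 - p) ^ (k - 1) * p else 0))
          - 1 / R|)
      (nhdsWithin 0 (Set.Ioo 0 1)) (nhds 0) := by
  set g : ℝ → ℝ := fun p => (1 / 2) * ∑ r ∈ Finset.range R,
      |(1 - p) ^ ((if r = 0 then R else r) - 1)
          / (∑ i ∈ Finset.range R, (1 - p) ^ i) - 1 / R| with hg
  have hgcont : ContinuousAt g 0 := by
    apply ContinuousAt.mul continuousAt_const
    apply tendsto_finset_sum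
    intro r _
    apply ContinuousAt.abs
    apply ContinuousAt.sub _ continuousAt_const
    apply ContinuousAt.div
    · fun_prop
    · fun_prop
    · simp only [sub_zero, one_pow, Finset.sum_const, Finset.card_range, nsmul_eq_mul, mul_one]
      exact_mod_cast (by omega : R ≠ 0) ∘ Nat.cast_injective.eq_iff.mp ∘ id
  have hg0 : g 0 = 0 := by
    simp [hg]
  have hgt : Tendsto g (nhdsWithin 0 (Set.Ioo 0 1)) (nhds 0) := by
    have h := hgcont.continuousWithinAt (s := Set.Ioo 0 1)
    rw [ContinuousWithinAt, hg0] at h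
    exact h
  apply hgt.congr'
  filter_upwards [self_mem_nhdsWithin] with p hp
  simp only [hg]
  congr 1
  apply Finset.sum_congr rfl
  intro r hr
  rw [geom_mod_tsum_eq R hR p hp r (Finset.mem_range.mp hr)]
end

section
/- Let N_p have the negative binomial distribution with fixed parameter m ≥ 1 and success probability p, and let R ≥ 1 be a fixed integer modulus. Then for every residue r, Pr[N_p mod R = r] → 1/R as p → 0. -/
open Filter

open Finset Complex

noncomputable def nbZeta (R : ℕ) : ℂ := Complex.exp (2 * Real.pi * Complex.I / R)

lemma nbZeta_prim {R : ℕ} (hR : 1 ≤ R) : IsPrimitiveRoot (nbZeta R) R :=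
  Complex.isPrimitiveRoot_exp R (by omega)

lemma nbZeta_ne_zero (R : ℕ) : nbZeta R ≠ 0 := Complex.exp_ne_zero _

lemma nbZeta_norm (R : ℕ) : ‖nbZeta R‖ = 1 := by
  rw [nbZeta, Complex.norm_exp]
  have : (2 * Real.pi * Complex.I / R).re = 0 := by
    rw [show 2 * (Real.pi:ℂ) * Complex.I / R = ((2 * Real.pi / R : ℝ):ℂ) * Complex.I by
      push_cast; ring]
    simp
  rw [this, Real.exp_zero]

lemma nb_mod_iff_dvd {R r k : ℕ} (hr : r < R) :
    k % R = r ↔ (R : ℤ) ∣ (k : ℤ) - (r : ℤ) := by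
  constructor
  · intro h
    refine ⟨(k / R : ℕ), ?_⟩
    have h2 : R * (k / R) + r = k := by
      have := Nat.div_add_mod k R; omega
    have h2' : (R:ℤ) * ((k/R : ℕ):ℤ) + r = k := by exact_mod_cast h2
    linarith
  · rintro ⟨q, hq⟩
    have hq0 : 0 ≤ q := by
      by_contra hc
      push_neg at hc
      have h1 : q ≤ -1 := by omega
      have h2 : (R:ℤ) * q ≤ (R:ℤ) * (-1) := by
        apply mul_le_mul_of_nonneg_left h1 (by positivity)
      have h3 : (0:ℤ) ≤ (k:ℤ) := by positivity
      have h4 : (r:ℤ) < R := by exact_mod_cast hr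
      linarith
    lift q to ℕ using hq0 with n
    have hk : k = R * n + r := by
      have : (k:ℤ) = R * n + r := by linarith
      exact_mod_cast this
    subst hk
    rw [Nat.mul_add_mod]
    exact Nat.mod_eq_of_lt hr

lemma nb_sum_root {R : ℕ} (hR : 1 ≤ R) {r : ℕ} (hr : r < R) (k : ℕ) :
    ∑ j ∈ range R, (nbZeta R ^ j) ^ k * ((nbZeta R ^ j) ^ r)⁻¹
      = if k % R = r then (R : ℂ) else 0 := by
  have hz : nbZeta R ≠ 0 := nbZeta_ne_zero R
  set η : ℂ := nbZeta R ^ ((k : ℤ) - (r : ℤ)) with hη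
  have hstep : ∀ j ∈ range R,
      (nbZeta R ^ j) ^ k * ((nbZeta R ^ j) ^ r)⁻¹ = η ^ j := by
    intro j _
    rw [hη, ← pow_mul, ← pow_mul, ← zpow_natCast (nbZeta R) (j*k),
      ← zpow_natCast (nbZeta R) (j*r), ← zpow_neg, ← zpow_add₀ hz,
      ← zpow_natCast (nbZeta R ^ ((k:ℤ)-(r:ℤ))) j, ← zpow_mul]
    congr 1
    push_cast
    ring
  rw [Finset.sum_congr rfl hstep]
  have hζR : nbZeta R ^ (R : ℤ) = 1 := by
    rw [zpow_natCast]; exact (nbZeta_prim hR).pow_eq_one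
  have hηR : η ^ R = 1 := by
    rw [hη, ← zpow_natCast _ R, ← zpow_mul, mul_comm, zpow_mul, hζR, one_zpow]
  by_cases hcase : k % R = r
  · obtain ⟨q, hq⟩ := (nb_mod_iff_dvd hr).mp hcase
    have hη1 : η = 1 := by
      rw [hη, hq, zpow_mul, hζR, one_zpow]
    simp [hη1, hcase]
  · have hη1 : η ≠ 1 := by
      intro hc
      exact hcase ((nb_mod_iff_dvd hr).mpr
        (((nbZeta_prim hR).zpow_eq_one_iff_dvd _).mp hc))
    rw [geom_sum_eq hη1, hηR, if_neg hcase]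
    simp

lemma nb_hasSum (m : ℕ) (hm : 1 ≤ m) {p : ℝ} (hp : p ∈ Set.Ioo (0:ℝ) 1) {w : ℂ}
    (hw : ‖w‖ = 1) :
    HasSum (fun k : ℕ =>
        (if m ≤ k then ((k - 1).choose (m - 1) : ℂ) * (1 - (p:ℂ)) ^ (k - m) * (p:ℂ) ^ m
         else 0) * w ^ k)
      (((p:ℂ) * w) ^ m / (1 - (1 - (p:ℂ)) * w) ^ m) := by
  obtain ⟨hp0, hp1⟩ := hp
  have hvnorm : ‖(1 - (p:ℂ)) * w‖ < 1 := by
    rw [norm_mul, hw, mul_one]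
    have : (1 - (p:ℂ)) = ((1 - p : ℝ) : ℂ) := by push_cast; ring
    rw [this, Complex.norm_real, Real.norm_eq_abs, abs_of_pos (by linarith)]
    linarith
  have base := hasSum_choose_mul_geometric_of_norm_lt_one (𝕜 := ℂ) (m - 1) hvnorm
  have base2 := base.mul_right ((p:ℂ) ^ m * w ^ m)
  rw [show (1:ℂ) / (1 - (1 - (p:ℂ)) * w) ^ (m - 1 + 1) * ((p:ℂ) ^ m * w ^ m)
      = ((p:ℂ) * w) ^ m / (1 - (1 - (p:ℂ)) * w) ^ m by
    rw [Nat.sub_add_cancel hm, mul_pow]; ring] at base2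
  have key : HasSum (fun n : ℕ =>
      (if m ≤ n + m then ((n + m - 1).choose (m - 1) : ℂ) * (1 - (p:ℂ)) ^ (n + m - m) * (p:ℂ) ^ m
       else 0) * w ^ (n + m))
      (((p:ℂ) * w) ^ m / (1 - (1 - (p:ℂ)) * w) ^ m) := by
    refine base2.congr_fun fun n => ?_
    rw [if_pos (by omega)]
    have h1 : n + m - 1 = n + (m - 1) := by omega
    have h2 : n + m - m = n := by omega
    rw [h1, h2, pow_add, mul_pow]
    ring
  refine (hasSum_nat_add_iff' (f := fun k : ℕ =>
      (if m ≤ k then ((k - 1).choose (m - 1) : ℂ) * (1 - (p:ℂ)) ^ (k - m) * (p:ℂ) ^ m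
       else 0) * w ^ k) m).mp ?_
  have hzero : ∑ i ∈ range m,
      (if m ≤ i then ((i - 1).choose (m - 1) : ℂ) * (1 - (p:ℂ)) ^ (i - m) * (p:ℂ) ^ m
       else 0) * w ^ i = 0 := by
    apply Finset.sum_eq_zero
    intro i hi
    rw [Finset.mem_range] at hi
    rw [if_neg (by omega), zero_mul]
  rw [hzero, sub_zero]
  exact key

/-- The complex-valued limit function. -/
noncomputable def nbV (m R r : ℕ) (p : ℝ) : ℂ :=
  (R:ℂ)⁻¹ * ∑ j ∈ range R,
    ((p:ℂ) * nbZeta R ^ j) ^ m / (1 - (1 - (p:ℂ)) * nbZeta R ^ j) ^ m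
      * ((nbZeta R ^ j) ^ r)⁻¹

lemma nb_hasSum_V (m : ℕ) (hm : 1 ≤ m) (R : ℕ) (hR : 1 ≤ R) (r : ℕ) (hr : r < R)
    {p : ℝ} (hp : p ∈ Set.Ioo (0:ℝ) 1) :
    HasSum (fun k : ℕ =>
      ((if m ≤ k ∧ k % R = r then
          ((k - 1).choose (m - 1) : ℝ) * (1 - p) ^ (k - m) * p ^ m else 0 : ℝ) : ℂ))
      (nbV m R r p) := by
  have hwnorm : ∀ j : ℕ, ‖nbZeta R ^ j‖ = 1 := by
    intro j; rw [norm_pow, nbZeta_norm, one_pow]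
  have Hj : ∀ j ∈ range R, HasSum (fun k : ℕ =>
      (if m ≤ k then ((k - 1).choose (m - 1) : ℂ) * (1 - (p:ℂ)) ^ (k - m) * (p:ℂ) ^ m
       else 0) * (nbZeta R ^ j) ^ k * ((nbZeta R ^ j) ^ r)⁻¹)
      (((p:ℂ) * nbZeta R ^ j) ^ m / (1 - (1 - (p:ℂ)) * nbZeta R ^ j) ^ m
        * ((nbZeta R ^ j) ^ r)⁻¹) := by
    intro j _
    exact (nb_hasSum m hm hp (hwnorm j)).mul_right _
  have Hsum := (hasSum_sum Hj).mul_left ((R:ℂ)⁻¹)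
  refine Hsum.congr_fun fun k => ?_
  have hfac : ∑ j ∈ range R,
      (if m ≤ k then ((k - 1).choose (m - 1) : ℂ) * (1 - (p:ℂ)) ^ (k - m) * (p:ℂ) ^ m
       else 0) * (nbZeta R ^ j) ^ k * ((nbZeta R ^ j) ^ r)⁻¹
      = (if m ≤ k then ((k - 1).choose (m - 1) : ℂ) * (1 - (p:ℂ)) ^ (k - m) * (p:ℂ) ^ m
       else 0) * ∑ j ∈ range R, (nbZeta R ^ j) ^ k * ((nbZeta R ^ j) ^ r)⁻¹ := by
    rw [Finset.mul_sum]
    exact Finset.sum_congr rfl fun j _ => by ring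
  rw [hfac, nb_sum_root hR hr k]
  have hRne : (R:ℂ) ≠ 0 := Nat.cast_ne_zero.mpr (by omega)
  by_cases h1 : m ≤ k
  · by_cases h2 : k % R = r
    · rw [if_pos h2, if_pos h1, if_pos ⟨h1, h2⟩]
      push_cast
      field_simp
    · rw [if_neg h2, if_neg (by tauto), mul_zero, mul_zero]
      simp
  · rw [if_neg h1, if_neg (by tauto), zero_mul]
    simp

/-- Asymptotic uniformity of the modular-reduced negative binomial
distribution: with fixed `m ≥ 1` and modulus `R ≥ 1`, for every residue
`r < R`, `Pr[N_p mod R = r] → 1/R` as `p → 0⁺`. -/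
theorem negBinomial_mod_tendsto_uniform (m : ℕ) (hm : 1 ≤ m)
    (R : ℕ) (hR : 1 ≤ R) (r : ℕ) (hr : r < R) :
    Tendsto (fun p : ℝ =>
        ∑' k : ℕ, (if m ≤ k ∧ k % R = r then
          ((k - 1).choose (m - 1) : ℝ) * (1 - p) ^ (k - m) * p ^ m else 0))
      (nhdsWithin 0 (Set.Ioo 0 1)) (nhds (1 / R)) := by
  have hRne : (R:ℂ) ≠ 0 := Nat.cast_ne_zero.mpr (by omega)
  -- Limit of nbV
  have hζ : ∀ j : ℕ, 0 < j → j < R → nbZeta R ^ j ≠ 1 := fun j h0 h1 =>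
    (nbZeta_prim hR).pow_ne_one_of_pos_of_lt h0.ne' h1
  have hofReal : Filter.Tendsto (fun p : ℝ => (p:ℂ)) (nhdsWithin 0 (Set.Ioo 0 1)) (nhds 0) := by
    have := (Complex.continuous_ofReal.tendsto 0).mono_left
      (nhdsWithin_le_nhds (s := Set.Ioo (0:ℝ) 1))
    simpa using this
  have hterm : ∀ j ∈ range R, Filter.Tendsto (fun p : ℝ =>
      ((p:ℂ) * nbZeta R ^ j) ^ m / (1 - (1 - (p:ℂ)) * nbZeta R ^ j) ^ m
        * ((nbZeta R ^ j) ^ r)⁻¹)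
      (nhdsWithin 0 (Set.Ioo 0 1)) (nhds (if j = 0 then (1:ℂ) else 0)) := by
    intro j hj
    rw [Finset.mem_range] at hj
    by_cases hj0 : j = 0
    · subst hj0
      rw [if_pos rfl]
      apply Filter.Tendsto.congr' (f₁ := fun _ => (1:ℂ))
      · filter_upwards [eventually_mem_nhdsWithin] with p hp
        have hpne : (p:ℂ) ≠ 0 := Complex.ofReal_ne_zero.mpr (ne_of_gt hp.1)
        rw [pow_zero, mul_one, mul_one, one_pow, inv_one, mul_one,
          show (1 : ℂ) - (1 - (p:ℂ)) = (p:ℂ) by ring, div_self (pow_ne_zero m hpne)]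
      · exact tendsto_const_nhds
    · rw [if_neg hj0]
      have hnum : Filter.Tendsto (fun p : ℝ => ((p:ℂ) * nbZeta R ^ j) ^ m)
          (nhdsWithin 0 (Set.Ioo 0 1)) (nhds 0) := by
        have := (hofReal.mul_const (nbZeta R ^ j)).pow m
        simpa [zero_pow (by omega : m ≠ 0)] using this
      have hden : Filter.Tendsto (fun p : ℝ => (1 - (1 - (p:ℂ)) * nbZeta R ^ j) ^ m)
          (nhdsWithin 0 (Set.Ioo 0 1)) (nhds ((1 - nbZeta R ^ j) ^ m)) := by
        have := ((tendsto_const_nhds (x := (1:ℂ))).sub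
          (((tendsto_const_nhds (x := (1:ℂ))).sub hofReal).mul_const (nbZeta R ^ j))).pow m
        simpa using this
      have hdne : ((1:ℂ) - nbZeta R ^ j) ^ m ≠ 0 :=
        pow_ne_zero m (sub_ne_zero.mpr (Ne.symm (hζ j (by omega) hj)))
      have := (hnum.div hden hdne).mul_const ((nbZeta R ^ j) ^ r)⁻¹
      simpa using this
  have hVsum : Filter.Tendsto (fun p : ℝ => ∑ j ∈ range R,
      ((p:ℂ) * nbZeta R ^ j) ^ m / (1 - (1 - (p:ℂ)) * nbZeta R ^ j) ^ m
        * ((nbZeta R ^ j) ^ r)⁻¹)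
      (nhdsWithin 0 (Set.Ioo 0 1)) (nhds (∑ j ∈ range R, if j = 0 then (1:ℂ) else 0)) :=
    tendsto_finset_sum _ hterm
  have hsum1 : (∑ j ∈ range R, if j = 0 then (1:ℂ) else 0) = 1 := by
    rw [Finset.sum_ite_eq' (range R) 0 (fun _ => (1:ℂ))]
    rw [if_pos (Finset.mem_range.mpr (by omega))]
  rw [hsum1] at hVsum
  have hV : Filter.Tendsto (fun p : ℝ => nbV m R r p)
      (nhdsWithin 0 (Set.Ioo 0 1)) (nhds ((R:ℂ)⁻¹)) := by
    have := hVsum.const_mul ((R:ℂ)⁻¹)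
    simpa [nbV] using this
  -- pass to real parts
  have hre : Filter.Tendsto (fun p : ℝ => (nbV m R r p).re)
      (nhdsWithin 0 (Set.Ioo 0 1)) (nhds (1 / (R:ℝ))) := by
    have := (Complex.continuous_re.tendsto _).comp hV
    have hval : ((R:ℂ)⁻¹).re = 1 / (R:ℝ) := by
      rw [show (R:ℂ)⁻¹ = (((R:ℝ)⁻¹ : ℝ) : ℂ) by push_cast; ring, Complex.ofReal_re]
      rw [one_div]
    rw [← hval]
    exact this
  refine Filter.Tendsto.congr' ?_ hre
  filter_upwards [eventually_mem_nhdsWithin] with p hp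
  have hhs := nb_hasSum_V m hm R hR r hr hp
  have hre2 : HasSum (fun k : ℕ =>
      (if m ≤ k ∧ k % R = r then
        ((k - 1).choose (m - 1) : ℝ) * (1 - p) ^ (k - m) * p ^ m else 0)) ((nbV m R r p).re) := by
    have := (Complex.hasSum_iff _ _).mp hhs
    have h1 := this.1
    simpa using h1
  exact (hre2.tsum_eq).symm
end

section
/- Let Y be an integer-valued random variable with Pr[Y = k] = f(k) where f is nonincreasing on the support. Then for any modulus R and residues r, r', |Pr[Y mod R = r] - Pr[Y mod R = r']| ≤ sup_k f(k). -/
lemma reindex (f : ℕ → ℝ) (R : ℕ) (hR : 1 ≤ R) (r : ℕ) (hr : r < R) :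
    (∑' k : ℕ, (if k % R = r then f k else 0)) = ∑' j : ℕ, f (j * R + r) := by
  have hg : Function.Injective (fun j : ℕ => j * R + r) := by
    intro a b h
    simp only [] at h
    exact Nat.eq_of_mul_eq_mul_right hR (by omega)
  have hsupp : Function.support (fun k => if k % R = r then f k else 0)
      ⊆ Set.range (fun j : ℕ => j * R + r) := by
    intro k hk
    simp only [Function.mem_support, ne_eq, ite_eq_right_iff, not_forall] at hk
    obtain ⟨hkr, -⟩ := hk
    refine ⟨k / R, ?_⟩
    have := Nat.div_add_mod k R
    show k / R * R + r = k
    rw [Nat.mul_comm]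
    omega
  have := hg.tsum_eq hsupp
  rw [← this]
  refine tsum_congr fun j => ?_
  simp [Nat.mul_add_mod' j R r, Nat.mod_eq_of_lt hr]

lemma diff_le (f : ℕ → ℝ) (hnonneg : ∀ k, 0 ≤ f k) (hf : Summable f) (hanti : Antitone f)
    (R : ℕ) (hR : 1 ≤ R) (r r' : ℕ) (hr : r < R) (hr' : r' < R) :
    ∑' j : ℕ, f (j * R + r) - ∑' j : ℕ, f (j * R + r') ≤ f 0 := by
  have inj : ∀ s : ℕ, Function.Injective (fun j : ℕ => j * R + s) := by
    intro s a b h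
    simp only [] at h
    exact Nat.eq_of_mul_eq_mul_right hR (by omega)
  have hs1 : Summable (fun j : ℕ => f (j * R + r)) := hf.comp_injective (inj r)
  have hs2 : Summable (fun j : ℕ => f (j * R + r')) := hf.comp_injective (inj r')
  rcases le_total r r' with hle | hle
  · have hs3 : Summable (fun j : ℕ => f ((j + 1) * R + r)) := hf.comp_injective (by
      intro a b h
      simp only [] at h
      have h2 : (a + 1) * R = (b + 1) * R := by omega
      have := Nat.eq_of_mul_eq_mul_right hR h2
      omega)
    have h3 : ∑' j : ℕ, f ((j + 1) * R + r) ≤ ∑' j : ℕ, f (j * R + r') := by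
      refine Summable.tsum_le_tsum (fun j => hanti ?_) hs3 hs2
      have : (j + 1) * R = j * R + R := by ring
      omega
    have h4 := Summable.tsum_eq_zero_add hs1
    simp only [Nat.zero_mul, Nat.zero_add] at h4
    have h5 : f r ≤ f 0 := hanti (Nat.zero_le r)
    linarith
  · have : ∑' j : ℕ, f (j * R + r) ≤ ∑' j : ℕ, f (j * R + r') :=
      Summable.tsum_le_tsum (fun j => hanti (by omega)) hs1 hs2
    linarith [hnonneg 0, this]


/-- Flattening by modular reduction: if `Y` has a nonincreasing probability
mass function `f` on the nonnegative integers, then for any modulus `R` and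
residues `r, r'`, the residue probabilities of `Y mod R` differ by at most
`sup_k f k`. -/
theorem mod_flattening (f : ℕ → ℝ) (hnonneg : ∀ k, 0 ≤ f k)
    (hsum : ∑' k : ℕ, f k = 1) (hanti : Antitone f)
    (R : ℕ) (hR : 1 ≤ R) (r r' : ℕ) (hr : r < R) (hr' : r' < R) :
    |(∑' k : ℕ, (if k % R = r then f k else 0))
      - ∑' k : ℕ, (if k % R = r' then f k else 0)| ≤ ⨆ k, f k := by
  have hf : Summable f := by
    by_contra h
    rw [tsum_eq_zero_of_not_summable h] at hsum
    norm_num at hsum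
  have hbdd : BddAbove (Set.range f) := ⟨f 0, by
    rintro y ⟨k, rfl⟩
    exact hanti (Nat.zero_le k)⟩
  have hsup : f 0 ≤ ⨆ k, f k := le_ciSup hbdd 0
  rw [reindex f R hR r hr, reindex f R hR r' hr', abs_sub_le_iff]
  constructor
  · exact le_trans (diff_le f hnonneg hf hanti R hR r r' hr hr') hsup
  · exact le_trans (diff_le f hnonneg hf hanti R hR r' r hr' hr) hsup
end

section
/- If Y is a nonnegative-integer-valued random variable whose point masses satisfy sup_k Pr[Y = k] ≤ ε, and Pr[Y = k] is nonincreasing in k, then the total variation distance between the law of Y mod R and the uniform distribution on Z/R is at most Rε/2. -/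
/-- Total variation bound for modular reduction: if `Y` has a nonincreasing
pmf `f` on ℕ with all point masses at most `ε`, then the total variation
distance between the law of `Y mod R` and the uniform distribution on
`{0,…,R-1}` is at most `Rε/2`. -/
theorem mod_tv_bound (f : ℕ → ℝ) (hnonneg : ∀ k, 0 ≤ f k)
    (hsum : ∑' k : ℕ, f k = 1) (hanti : Antitone f)
    (ε : ℝ) (hε : ∀ k, f k ≤ ε) (R : ℕ) (hR : 1 ≤ R) :
    (1 / 2) * ∑ r ∈ Finset.range R,
        |(∑' k : ℕ, (if k % R = r then f k else 0)) - 1 / R|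
      ≤ R * ε / 2 := by
  have hRpos : 0 < R := hR
  have hsumm : Summable f := by
    by_contra h
    rw [tsum_eq_zero_of_not_summable h] at hsum
    norm_num at hsum
  set S : ℕ → ℝ := fun r => ∑' k : ℕ, (if k % R = r then f k else 0) with hSdef
  have hSsumm : ∀ r, Summable (fun k => if k % R = r then f k else 0) := fun r =>
    hsumm.of_nonneg_of_le (fun k => by by_cases h : k % R = r <;> simp [h, hnonneg k])
      (fun k => by by_cases h : k % R = r <;> simp [h, hnonneg k])
  have hinj : ∀ r, Function.Injective (fun j : ℕ => j * R + r) := by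
    intro r a b hab
    simp only [] at hab
    have h1 : a * R = b * R := by omega
    exact Nat.eq_of_mul_eq_mul_right hRpos h1
  have hmod : ∀ r < R, ∀ j : ℕ, (j * R + r) % R = r := by
    intro r hr j
    rw [Nat.mul_add_mod']
    exact Nat.mod_eq_of_lt hr
  have hre : ∀ r < R, S r = ∑' j : ℕ, f (j * R + r) := by
    intro r hr
    rw [hSdef]
    refine ((Function.Injective.tsum_eq (hinj r) ?_).symm).trans ?_
    · intro x hx
      by_cases h : x % R = r
      · refine ⟨x / R, ?_⟩
        simp only []
        rw [← h]
        exact Nat.div_add_mod' x R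
      · exfalso
        exact hx (by simp [h])
    · exact tsum_congr fun j => by simp [hmod r hr j]
  have hg : ∀ r < R, Summable (fun j : ℕ => f (j * R + r)) := by
    intro r hr
    have h := (hSsumm r).comp_injective (hinj r)
    refine h.congr fun j => ?_
    simp [Function.comp, hmod r hr j]
  have hmono : ∀ r r', r ≤ r' → r' < R → S r' ≤ S r := by
    intro r r' hrr hr'
    rw [hre r (lt_of_le_of_lt hrr hr'), hre r' hr']
    exact Summable.tsum_le_tsum (fun j => hanti (by omega)) (hg r' hr') (hg r (by omega))
  have hgap : S 0 ≤ S (R - 1) + ε := by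
    have h0 : S 0 = ∑' j : ℕ, f (j * R) := by simpa using hre 0 hRpos
    have htail : Summable (fun j : ℕ => f ((j + 1) * R)) := by
      have h := (hg 0 hRpos).comp_injective (add_left_injective 1)
      simpa [Function.comp_def] using h
    have hshift : ∑' j : ℕ, f (j * R) = f 0 + ∑' j : ℕ, f ((j + 1) * R) := by
      simpa using Summable.tsum_eq_zero_add (f := fun j : ℕ => f (j * R)) (by simpa using hg 0 hRpos)
    have hle : ∑' j : ℕ, f ((j + 1) * R) ≤ ∑' j : ℕ, f (j * R + (R - 1)) := by
      refine Summable.tsum_le_tsum (fun j => hanti ?_) htail (hg (R - 1) (by omega))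
      have : (j + 1) * R = j * R + R := by ring
      omega
    have hR1 : S (R - 1) = ∑' j : ℕ, f (j * R + (R - 1)) := hre (R - 1) (by omega)
    have hf0 : f 0 ≤ ε := hε 0
    rw [h0, hshift, hR1] at *
    linarith
  have hsum1 : ∑ r ∈ Finset.range R, S r = 1 := by
    rw [hSdef, ← Summable.tsum_finsetSum (fun r _ => hSsumm r), ← hsum]
    refine tsum_congr fun k => ?_
    rw [Finset.sum_ite_eq (Finset.range R) (k % R) (fun _ => f k)]
    simp [Nat.mod_lt k hRpos]
  have hRr : (0:ℝ) < (R:ℝ) := by exact_mod_cast hRpos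
  have hmax : 1 ≤ (R:ℝ) * S 0 := by
    calc (1:ℝ) = ∑ r ∈ Finset.range R, S r := hsum1.symm
    _ ≤ ∑ _r ∈ Finset.range R, S 0 :=
        Finset.sum_le_sum fun r hr => hmono 0 r (Nat.zero_le r) (Finset.mem_range.mp hr)
    _ = (R:ℝ) * S 0 := by simp [Finset.sum_const, nsmul_eq_mul]
  have hmin : (R:ℝ) * S (R - 1) ≤ 1 := by
    calc (R:ℝ) * S (R - 1) = ∑ _r ∈ Finset.range R, S (R - 1) := by
          simp [Finset.sum_const, nsmul_eq_mul]
    _ ≤ ∑ r ∈ Finset.range R, S r :=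
        Finset.sum_le_sum fun r hr => hmono r (R - 1) (by
          have := Finset.mem_range.mp hr; omega) (by omega)
    _ = 1 := hsum1
  have h1 : S (R - 1) ≤ 1 / (R:ℝ) := by
    rw [le_div_iff₀ hRr]; linarith [hmin]
  have h2 : 1 / (R:ℝ) ≤ S 0 := by
    rw [div_le_iff₀ hRr]; linarith [hmax]
  have key : ∀ r < R, |S r - 1 / (R:ℝ)| ≤ ε := by
    intro r hr
    have hup : S r ≤ S 0 := hmono 0 r (Nat.zero_le r) hr
    have hlo : S (R - 1) ≤ S r := hmono r (R - 1) (by omega) (by omega)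
    rw [abs_le]
    constructor <;> [linarith; linarith]
  have hsumle : ∑ r ∈ Finset.range R,
      |(∑' k : ℕ, (if k % R = r then f k else 0)) - 1 / (R:ℝ)| ≤ (R:ℝ) * ε := by
    calc ∑ r ∈ Finset.range R, |S r - 1 / (R:ℝ)|
        ≤ ∑ _r ∈ Finset.range R, ε :=
          Finset.sum_le_sum fun r hr => key r (Finset.mem_range.mp hr)
    _ = (R:ℝ) * ε := by simp [Finset.sum_const, nsmul_eq_mul]
  linarith
end
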